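/- Let n ≥ 1 and n_D, n_I ≤ n be nonnegative integers with n = max(n_D, n_I), and suppose n_D ≠ n_I. Let S be the n×n shift matrix over 𝔽₂. Then the 2n×2n block matrix [[S^{n−n_D}, S^{n−n_I}], [S^{n−n_I}, S^{n−n_D}]] over 𝔽₂ is invertible. -/
import Mathlib


/-- The n×n shift matrix over 𝔽₂ : 1's on the first subdiagonal. -/
def shiftMatrix (n : ℕ) : Matrix (Fin n) (Fin n) (ZMod 2) :=
  fun i j => if (i : ℕ) = (j : ℕ) + 1 then 1 else 0

lemma shiftMatrix_pow_apply (n k : ℕ) (i j : Fin n) :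
    ((shiftMatrix n) ^ k) i j = if (i : ℕ) = (j : ℕ) + k then 1 else 0 := by
  induction k generalizing i j with
  | zero =>
    simp [Matrix.one_apply, Fin.ext_iff]
  | succ k ih =>
    rw [pow_succ, Matrix.mul_apply]
    by_cases h : (i : ℕ) = (j : ℕ) + (k + 1)
    · have hj1 : (j : ℕ) + 1 < n := by omega
      rw [if_pos h]
      rw [Finset.sum_eq_single (⟨(j : ℕ) + 1, hj1⟩ : Fin n)]
      · rw [ih]
        simp only [shiftMatrix, Fin.val_mk]
        rw [if_pos (show (i:ℕ) = (j:ℕ) + 1 + k by omega)]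
        simp
      · intro m _ hm
        simp only [shiftMatrix]
        rw [if_neg (fun hc => hm (by apply Fin.ext; simpa using hc)), mul_zero]
      · intro h'; exact absurd (Finset.mem_univ _) h'
    · rw [if_neg h]
      apply Finset.sum_eq_zero
      intro m _
      rw [ih]
      simp only [shiftMatrix]
      by_cases hm : (m : ℕ) = (j : ℕ) + 1
      · rw [if_neg (by omega), zero_mul]
      · rw [if_neg hm, mul_zero]

lemma shiftMatrix_pow_eq_zero (n m : ℕ) (hm : n ≤ m) : (shiftMatrix n) ^ m = 0 := by
  ext i j
  rw [shiftMatrix_pow_apply]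
  rw [if_neg (by omega)]
  rfl

lemma shiftMatrix_pow_nilpotent (n k : ℕ) (hk : 1 ≤ k) :
    IsNilpotent ((shiftMatrix n) ^ k) := by
  refine ⟨n, ?_⟩
  rw [← pow_mul]
  exact shiftMatrix_pow_eq_zero n _ (Nat.le_mul_of_pos_left n hk)

theorem symmetric_block_matrix_invertible (n nD nI : ℕ)
    (hn1 : 1 ≤ n) (hD : nD ≤ n) (hI : nI ≤ n) (hn : n = max nD nI) (hne : nD ≠ nI) :
    IsUnit (Matrix.fromBlocks
      ((shiftMatrix n) ^ (n - nD)) ((shiftMatrix n) ^ (n - nI))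
      ((shiftMatrix n) ^ (n - nI)) ((shiftMatrix n) ^ (n - nD))) := by
  have key : ∀ k, 1 ≤ k → IsUnit (Matrix.fromBlocks (1 : Matrix (Fin n) (Fin n) (ZMod 2))
      ((shiftMatrix n) ^ k) ((shiftMatrix n) ^ k) 1) := by
    intro k hk
    rw [Matrix.isUnit_iff_isUnit_det, Matrix.det_fromBlocks_one₁₁,
      ← Matrix.isUnit_iff_isUnit_det]
    have hnil := shiftMatrix_pow_nilpotent n k hk
    have := (Commute.refl ((shiftMatrix n) ^ k)).isNilpotent_mul_left hnil
    exact this.isUnit_one_sub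
  have hJ : IsUnit (Matrix.fromBlocks (0 : Matrix (Fin n) (Fin n) (ZMod 2)) (1 : Matrix (Fin n) (Fin n) (ZMod 2)) (1 : Matrix (Fin n) (Fin n) (ZMod 2)) 0) := by
    have hmul : (Matrix.fromBlocks (0 : Matrix (Fin n) (Fin n) (ZMod 2))
        (1 : Matrix (Fin n) (Fin n) (ZMod 2)) (1 : Matrix (Fin n) (Fin n) (ZMod 2)) 0)
        * (Matrix.fromBlocks 0 1 1 0) = 1 := by
      simp [Matrix.fromBlocks_multiply, ← Matrix.fromBlocks_one]
    exact ⟨⟨_, _, hmul, hmul⟩, rfl⟩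
  rcases lt_or_gt_of_ne hne with h | h
  · -- nD < nI, so n = nI, n - nI = 0
    have h0 : n - nI = 0 := by omega
    have hk : 1 ≤ n - nD := by omega
    rw [h0, pow_zero]
    have hprod : Matrix.fromBlocks ((shiftMatrix n) ^ (n - nD)) 1 1 ((shiftMatrix n) ^ (n - nD))
        = (Matrix.fromBlocks 1 ((shiftMatrix n) ^ (n - nD)) ((shiftMatrix n) ^ (n - nD)) 1)
          * (Matrix.fromBlocks 0 1 1 0) := by
      simp [Matrix.fromBlocks_multiply]
    rw [hprod]
    exact (key _ hk).mul hJ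
  · -- nI < nD, so n = nD, n - nD = 0
    have h0 : n - nD = 0 := by omega
    have hk : 1 ≤ n - nI := by omega
    rw [h0, pow_zero]
    exact key _ hk
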